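/- arXiv:2604.21506 — 3 statements merged into one kernel-verified Lean document; each statement's English description precedes it below -/
import Mathlib

section
/- Let μ be an outer measure on a domain Ω ⊆ ℝⁿ and let 1 ≤ q < ∞. Then for every function f defined on Ω, writing Ω_λ = {x ∈ Ω : |f(x)| > λ}, one has (∫₀^∞ λ^{q-1} μ(Ω_λ) dλ)^{1/q} ≤ ∫₀^∞ μ(Ω_λ)^{1/q} dλ. -/
open MeasureTheory Set

/-- layer-cake type inequality for outer measures:
`(∫₀^∞ λ^{q-1} μ(Ω_λ) dλ)^{1/q} ≤ ∫₀^∞ μ(Ω_λ)^{1/q} dλ`. -/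
theorem stmt0 {n : ℕ} (Ω : Set (EuclideanSpace ℝ (Fin n)))
    (hΩopen : IsOpen Ω) (hΩconn : IsConnected Ω)
    (μ : MeasureTheory.OuterMeasure (EuclideanSpace ℝ (Fin n)))
    (q : ℝ) (hq : 1 ≤ q) (f : EuclideanSpace ℝ (Fin n) → ℝ) :
    (∫⁻ l in Set.Ioi (0 : ℝ), ENNReal.ofReal (l ^ (q - 1)) * μ {x ∈ Ω | l < |f x|}) ^ (1 / q)
      ≤ ∫⁻ l in Set.Ioi (0 : ℝ), (μ {x ∈ Ω | l < |f x|}) ^ (1 / q) := by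
  set F : ℝ → ENNReal := fun l => μ {x ∈ Ω | l < |f x|} with hF
  set A : ENNReal := ∫⁻ l in Set.Ioi (0 : ℝ), F l ^ (1 / q) with hA
  have hq0 : (0 : ℝ) < q := lt_of_lt_of_le one_pos hq
  have hq1 : (0 : ℝ) ≤ q - 1 := by linarith
  have h1q : (0 : ℝ) ≤ 1 / q := by positivity
  rcases eq_or_ne A ⊤ with hAtop | hAtop
  · rw [hAtop]; exact le_top
  -- key claim
  have key : ∀ l : ℝ, 0 < l → ENNReal.ofReal l * F l ^ (1 / q) ≤ A := by
    intro l hl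
    have h1 : ENNReal.ofReal l * F l ^ (1 / q)
        = ∫⁻ _ in Set.Ioc (0 : ℝ) l, F l ^ (1 / q) := by
      rw [setLIntegral_const, Real.volume_Ioc, sub_zero, mul_comm]
    rw [h1]
    calc ∫⁻ _ in Set.Ioc (0 : ℝ) l, F l ^ (1 / q)
        ≤ ∫⁻ t in Set.Ioc (0 : ℝ) l, F t ^ (1 / q) := by
          apply setLIntegral_mono' measurableSet_Ioc
          intro t ht
          refine ENNReal.rpow_le_rpow ?_ h1q
          exact μ.mono fun x hx => ⟨hx.1, lt_of_le_of_lt ht.2 hx.2⟩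
      _ ≤ A := lintegral_mono_set Ioc_subset_Ioi_self
  have pointwise : ∀ l : ℝ, l ∈ Set.Ioi (0 : ℝ) →
      ENNReal.ofReal (l ^ (q - 1)) * F l ≤ A ^ (q - 1) * F l ^ (1 / q) := by
    intro l hl
    have hl : (0 : ℝ) < l := hl
    have e1 : ENNReal.ofReal (l ^ (q - 1)) = (ENNReal.ofReal l) ^ (q - 1) :=
      (ENNReal.ofReal_rpow_of_pos hl).symm
    have e2 : F l = (F l ^ (1 / q)) ^ (q - 1) * F l ^ (1 / q) := by
      rw [← ENNReal.rpow_mul, ← ENNReal.rpow_add_of_nonneg _ _ (by positivity) h1q]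
      rw [show 1 / q * (q - 1) + 1 / q = 1 by field_simp; ring]
      rw [ENNReal.rpow_one]
    calc ENNReal.ofReal (l ^ (q - 1)) * F l
        = (ENNReal.ofReal l * F l ^ (1 / q)) ^ (q - 1) * F l ^ (1 / q) := by
          rw [e1, ENNReal.mul_rpow_of_nonneg _ _ hq1]
          nth_rewrite 1 [e2]; ring
      _ ≤ A ^ (q - 1) * F l ^ (1 / q) := by
          exact mul_le_mul_left (ENNReal.rpow_le_rpow (key l hl) hq1) _
  have hint : (∫⁻ l in Set.Ioi (0 : ℝ), ENNReal.ofReal (l ^ (q - 1)) * F l)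
      ≤ A ^ (q - 1) * A := by
    calc (∫⁻ l in Set.Ioi (0 : ℝ), ENNReal.ofReal (l ^ (q - 1)) * F l)
        ≤ ∫⁻ l in Set.Ioi (0 : ℝ), A ^ (q - 1) * F l ^ (1 / q) :=
          setLIntegral_mono' measurableSet_Ioi pointwise
      _ = A ^ (q - 1) * A := by
          rw [lintegral_const_mul' _ _ (ENNReal.rpow_ne_top_of_nonneg hq1 hAtop)]
  calc (∫⁻ l in Set.Ioi (0 : ℝ), ENNReal.ofReal (l ^ (q - 1)) * F l) ^ (1 / q)
      ≤ (A ^ (q - 1) * A) ^ (1 / q) := ENNReal.rpow_le_rpow hint h1q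
    _ = A := by
        rw [show A ^ (q - 1) * A = A ^ q by
          nth_rewrite 2 [← ENNReal.rpow_one A]
          rw [← ENNReal.rpow_add_of_nonneg _ _ hq1 zero_le_one, sub_add_cancel]]
        rw [← ENNReal.rpow_mul, mul_one_div, div_self (ne_of_gt hq0), ENNReal.rpow_one]
end

section
/- Let n ≥ 2, 1 ≤ s ≤ n/(n−δ) with δ ∈ (0,1). Then for every open set U ⊆ ℝⁿ, |U|^{s(n−δ)/n} ≤ H^{s(n−δ)}_∞(U), where |U| is the Lebesgue measure of U (normalized so that H^n_∞ of a ball of radius r is ω_n rⁿ = its Lebesgue measure). -/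
open MeasureTheory Set
open scoped ENNReal NNReal

/-- Subadditivity of `x ↦ x ^ p` for `0 < p ≤ 1` applied to a `tsum` in `ℝ≥0∞`. -/
lemma tsum_rpow_aux {f : ℕ → ℝ≥0∞} {p : ℝ} (hp : 0 < p) (hp1 : p ≤ 1) :
    (∑' i, f i) ^ p ≤ ∑' i, (f i) ^ p := by
  rw [ENNReal.tsum_eq_iSup_sum]
  have hiso : (⨆ s : Finset ℕ, ∑ i ∈ s, f i) ^ p
      = ⨆ s : Finset ℕ, (∑ i ∈ s, f i) ^ p :=
    (ENNReal.orderIsoRpow p hp).map_iSup _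
  rw [hiso]
  refine iSup_le fun s => ?_
  calc (∑ i ∈ s, f i) ^ p ≤ ∑ i ∈ s, (f i) ^ p := by
        classical
        induction s using Finset.induction with
        | empty => simp [ENNReal.zero_rpow_of_pos hp]
        | insert _ _ h ih =>
          rw [Finset.sum_insert h, Finset.sum_insert h]
          exact le_trans (ENNReal.rpow_add_le_add_rpow _ _ hp.le hp1)
            (add_le_add_right ih _)
    _ ≤ ∑' i, (f i) ^ p := ENNReal.sum_le_tsum s

/-- `ω_n ^ (β/n) ≤ ω_β` for `0 < β ≤ n`, via log-convexity of the Gamma function. -/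
lemma omega_aux {n : ℕ} (hn : 0 < n) {β : ℝ} (hβ : 0 < β) (hβn : β ≤ n) :
    (Real.pi ^ ((n : ℝ) / 2) / Real.Gamma ((n : ℝ) / 2 + 1)) ^ (β / n)
      ≤ Real.pi ^ (β / 2) / Real.Gamma (β / 2 + 1) := by
  have hn' : (0 : ℝ) < n := Nat.cast_pos.mpr hn
  have hp0 : 0 < β / n := div_pos hβ hn'
  have hΓn : 0 < Real.Gamma ((n : ℝ) / 2 + 1) := Real.Gamma_pos_of_pos (by positivity)
  have hΓβ : 0 < Real.Gamma (β / 2 + 1) := Real.Gamma_pos_of_pos (by positivity)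
  have hπ : 0 < Real.pi := Real.pi_pos
  have hconv := Real.convexOn_log_Gamma.2 (show (1:ℝ) ∈ Set.Ioi 0 by norm_num)
    (show (n:ℝ)/2 + 1 ∈ Set.Ioi 0 by simp; positivity)
    (show (0:ℝ) ≤ 1 - β/n by linarith [(div_le_one hn').mpr hβn])
    hp0.le (by ring)
  have hpt : (1 - β/n) • (1:ℝ) + (β/n) • ((n:ℝ)/2 + 1) = β/2 + 1 := by
    field_simp
    linear_combination (β + 2) * mul_inv_cancel₀ hn'.ne'
  rw [hpt] at hconv
  simp only [Function.comp_apply, Real.Gamma_one, Real.log_one, smul_eq_mul,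
    mul_one] at hconv
  have hlog : Real.log (Real.Gamma (β / 2 + 1))
      ≤ (β/n) * Real.log (Real.Gamma ((n:ℝ)/2 + 1)) := by linarith
  have hΓ : Real.Gamma (β / 2 + 1) ≤ Real.Gamma ((n:ℝ)/2 + 1) ^ (β/n) := by
    rw [Real.rpow_def_of_pos hΓn]
    calc Real.Gamma (β / 2 + 1) = Real.exp (Real.log (Real.Gamma (β / 2 + 1))) :=
          (Real.exp_log hΓβ).symm
      _ ≤ _ := Real.exp_le_exp.mpr (by rw [mul_comm] at hlog; exact hlog)
  have hπpow : (Real.pi ^ ((n:ℝ)/2)) ^ (β/n) = Real.pi ^ (β/2) := by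
    rw [← Real.rpow_mul hπ.le]
    congr 1
    field_simp
  rw [Real.div_rpow (by positivity) hΓn.le, hπpow]
  exact div_le_div_of_nonneg_left (by positivity) hΓβ hΓ

/-- The key per-ball estimate: `|B(x,r)|^{β/n} ≤ ω_β r^β`. -/
lemma ball_term {n : ℕ} (hn : 0 < n) {β : ℝ} (hβ : 0 < β) (hβn : β ≤ n)
    (x : EuclideanSpace ℝ (Fin n)) (r : ℝ) :
    volume (Metric.ball x r) ^ (β / n) ≤
      ENNReal.ofReal (Real.pi ^ (β / 2) / Real.Gamma (β / 2 + 1) * r ^ β) := by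
  have hn' : (0 : ℝ) < n := Nat.cast_pos.mpr hn
  rcases le_or_gt r 0 with hr | hr
  · simp [Metric.ball_eq_empty.mpr hr, ENNReal.zero_rpow_of_pos (div_pos hβ hn')]
  · have : Nonempty (Fin n) := ⟨⟨0, hn⟩⟩
    have hΓn : 0 < Real.Gamma ((n : ℝ) / 2 + 1) := Real.Gamma_pos_of_pos (by positivity)
    have hsq : Real.sqrt Real.pi ^ n = Real.pi ^ ((n : ℝ) / 2) := by
      rw [Real.sqrt_eq_rpow, ← Real.rpow_natCast (Real.pi ^ ((1:ℝ)/2)) n,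
        ← Real.rpow_mul Real.pi_pos.le]
      congr 1; ring
    have hc : 0 < Real.sqrt Real.pi ^ n / Real.Gamma ((n : ℝ) / 2 + 1) := by
      apply div_pos _ hΓn
      positivity
    rw [EuclideanSpace.volume_ball]
    simp only [Fintype.card_fin]
    rw [← ENNReal.ofReal_pow hr.le, ← ENNReal.ofReal_mul (by positivity),
      ENNReal.ofReal_rpow_of_pos (by positivity)]
    apply ENNReal.ofReal_le_ofReal
    have hrn : (r ^ n) ^ (β / n) = r ^ β := by
      rw [← Real.rpow_natCast r n, ← Real.rpow_mul hr.le]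
      congr 1
      field_simp
    rw [Real.mul_rpow (by positivity) hc.le, hrn, hsq, mul_comm]
    exact mul_le_mul_of_nonneg_right (omega_aux hn hβ hβn) (by positivity)

/-- The `α`-dimensional Hausdorff content of a set `U ⊆ ℝⁿ`. -/
noncomputable def hausdorffContent (n : ℕ) (α : ℝ)
    (U : Set (EuclideanSpace ℝ (Fin n))) : ℝ≥0∞ :=
  ⨅ (c : ℕ → EuclideanSpace ℝ (Fin n) × ℝ)
    (_ : U ⊆ ⋃ i, Metric.ball (c i).1 (c i).2),
    ∑' i, ENNReal.ofReal (Real.pi ^ (α / 2) / Real.Gamma (α / 2 + 1) * (c i).2 ^ α)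

/-- for open `U ⊆ ℝⁿ`, `|U|^{s(n−δ)/n} ≤ H^{s(n−δ)}_∞(U)`. -/
theorem stmt4 {n : ℕ} (hn : 2 ≤ n) (δ s : ℝ) (hδ : δ ∈ Set.Ioo (0 : ℝ) 1)
    (hs1 : 1 ≤ s) (hs2 : s ≤ (n : ℝ) / ((n : ℝ) - δ))
    (U : Set (EuclideanSpace ℝ (Fin n))) (hU : IsOpen U) :
    (volume U) ^ (s * ((n : ℝ) - δ) / n) ≤ hausdorffContent n (s * ((n : ℝ) - δ)) U := by
  have hn0 : 0 < n := lt_of_lt_of_le (by norm_num) hn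
  have hn' : (0 : ℝ) < n := Nat.cast_pos.mpr hn0
  have hn2 : (2 : ℝ) ≤ n := by exact_mod_cast hn
  have hnδ : 0 < (n : ℝ) - δ := by linarith [hδ.2]
  set β : ℝ := s * ((n : ℝ) - δ) with hβdef
  have hβ : 0 < β := mul_pos (by linarith) hnδ
  have hβn : β ≤ n := by
    have := (le_div_iff₀ hnδ).mp hs2
    linarith
  have hp : 0 < β / n := div_pos hβ hn'
  have hp1 : β / n ≤ 1 := (div_le_one hn').mpr hβn
  unfold hausdorffContent
  refine le_iInf fun c => le_iInf fun hc => ?_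
  calc (volume U) ^ (β / n)
      ≤ (∑' i, volume (Metric.ball (c i).1 (c i).2)) ^ (β / n) :=
        ENNReal.rpow_le_rpow
          (le_trans (measure_mono hc) (measure_iUnion_le _)) hp.le
    _ ≤ ∑' i, (volume (Metric.ball (c i).1 (c i).2)) ^ (β / n) :=
        tsum_rpow_aux hp hp1
    _ ≤ ∑' i, ENNReal.ofReal
          (Real.pi ^ (β / 2) / Real.Gamma (β / 2 + 1) * (c i).2 ^ β) :=
        ENNReal.tsum_le_tsum fun i => ball_term hn0 hβ hβn _ _
end

section
/- Let δ, τ ∈ (0,1), 1 ≤ s ≤ n/(n−δ), and let Ω ⊆ ℝⁿ be an s-distance John domain with John center x_J, John constant C_J ≥ 1, and B₀ = B(x_J, d(x_J)/18). Suppose U ⊆ Ω is open with U ∩ B₀ = ∅. Then there exists a countable collection of pairwise disjoint balls {B(x_i, R_i)} such that U ⊆ ⋃_i B(x_i, 5 C₁ R_i) and Σ_i R_i^{s(n−δ)} ≤ C₂(1−δ) 𝒫_{δ,τ}(U, Ω), where C₂ depends only on n and C₁ ≥ 1 depends only on τ, s, C_J, diam Ω. -/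
open MeasureTheory Set
open scoped ENNReal NNReal

/-- The improved fractional Sobolev energy; for `f = χ_U` it is the improved relative
fractional perimeter `𝒫_{δ,τ}(U,Ω)`. -/
noncomputable def fracEnergy (n : ℕ) (δ τ : ℝ) (Ω : Set (EuclideanSpace ℝ (Fin n)))
    (f : EuclideanSpace ℝ (Fin n) → ℝ) : ℝ≥0∞ :=
  ∫⁻ y in Ω, ∫⁻ x in {x ∈ Ω | dist x y < τ * Metric.infDist y (frontier Ω)},
    ENNReal.ofReal (|f x - f y| / dist x y ^ ((n : ℝ) + δ))

/-- `Ω` is an `s`-distance John domain with John center `xJ` and John constant `CJ`. -/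
def IsDistanceJohn (n : ℕ) (s CJ : ℝ) (xJ : EuclideanSpace ℝ (Fin n))
    (Ω : Set (EuclideanSpace ℝ (Fin n))) : Prop :=
  xJ ∈ Ω ∧ ∀ x ∈ Ω, ∃ γ : ℝ → EuclideanSpace ℝ (Fin n),
    ContinuousOn γ (Set.Icc 0 1) ∧ γ 0 = x ∧ γ 1 = xJ ∧
    ∀ t ∈ Set.Icc (0 : ℝ) 1, γ t ∈ Ω ∧
      dist (γ t) x ^ s < CJ * Metric.infDist (γ t) (frontier Ω)


section helpers
open Metric
variable {n : ℕ}
local notation "E" => EuclideanSpace ℝ (Fin n)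


lemma volBall_toReal (hn : 0 < n) (z : E) (r : ℝ) :
    (volume (ball z r)).toReal = (max r 0)^n * (volume (ball (0:E) 1)).toReal := by
  haveI : Nontrivial E := by
    have : Nonempty (Fin n) := ⟨⟨0, hn⟩⟩
    infer_instance
  rcases le_or_gt 0 r with hr | hr
  · rw [max_eq_left hr, Measure.addHaar_ball _ _ hr, finrank_euclideanSpace_fin,
      ENNReal.toReal_mul, ENNReal.toReal_ofReal (by positivity)]
  · rw [ball_eq_empty.2 hr.le, max_eq_right hr.le, zero_pow hn.ne', measure_empty, zero_mul]
    simp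

lemma key_ineq (U : Set E) (z z' : E) (ρ ρ' h : ℝ)
    (hd : dist z' z + |ρ' - ρ| ≤ h) :
    |(volume (U ∩ ball z' ρ')).toReal - (volume (U ∩ ball z ρ)).toReal|
      ≤ (volume (ball z (ρ+h))).toReal - (volume (ball z (ρ-h))).toReal := by
  have h0 : 0 ≤ h := le_trans (by positivity) hd
  have hBp : ∀ w : E, ∀ σ : ℝ, dist w z + |σ - ρ| ≤ h → ball w σ ⊆ ball z (ρ+h) := by
    intro w σ hw x hx
    rw [mem_ball] at hx ⊢
    have h1 : |σ - ρ| ≤ h - dist w z := by linarith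
    have h2 := (abs_le.1 h1).2
    calc dist x z ≤ dist x w + dist w z := dist_triangle _ _ _
      _ < σ + dist w z := by linarith
      _ ≤ ρ + h := by linarith
  have hBm : ∀ w : E, ∀ σ : ℝ, dist w z + |σ - ρ| ≤ h → ball z (ρ-h) ⊆ ball w σ := by
    intro w σ hw x hx
    rw [mem_ball] at hx ⊢
    have h1 : |σ - ρ| ≤ h - dist w z := by linarith
    have h2 := (abs_le.1 h1).1
    have h3 : dist z w = dist w z := dist_comm _ _
    calc dist x w ≤ dist x z + dist z w := dist_triangle _ _ _
      _ < (ρ - h) + dist z w := by linarith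
      _ ≤ σ := by linarith
  have hsub1 : ball z' ρ' ⊆ ball z (ρ+h) := hBp z' ρ' hd
  have hsub2 : ball z ρ ⊆ ball z (ρ+h) := hBp z ρ (by simpa using h0)
  have hsub3 : ball z (ρ-h) ⊆ ball z' ρ' := hBm z' ρ' hd
  have hsub4 : ball z (ρ-h) ⊆ ball z ρ := hBm z ρ (by simpa using h0)
  set Bp := ball z (ρ+h) with hBpdef
  set Bm := ball z (ρ-h) with hBmdef
  have hfin : volume Bp ≠ ⊤ := measure_ball_lt_top.ne
  have hfinU : ∀ s : Set E, s ⊆ Bp → volume s ≠ ⊤ :=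
    fun s hs => ((measure_mono hs).trans_lt measure_ball_lt_top).ne
  have key : ∀ B : Set E, Bm ⊆ B → B ⊆ Bp →
      (volume (U ∩ Bm)).toReal ≤ (volume (U ∩ B)).toReal ∧
      (volume (U ∩ B)).toReal ≤ (volume (U ∩ Bp)).toReal := by
    intro B h1 h2
    exact ⟨ENNReal.toReal_mono (hfinU _ (inter_subset_right.trans h2))
        (measure_mono (inter_subset_inter_right _ h1)),
      ENNReal.toReal_mono (hfinU _ inter_subset_right)
        (measure_mono (inter_subset_inter_right _ h2))⟩
  obtain ⟨a1, a2⟩ := key _ hsub3 hsub1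
  obtain ⟨b1, b2⟩ := key _ hsub4 hsub2
  have hup : (volume (U ∩ Bp)).toReal - (volume (U ∩ Bm)).toReal
      ≤ (volume Bp).toReal - (volume Bm).toReal := by
    have hcov : U ∩ Bp ⊆ (U ∩ Bm) ∪ (Bp \ Bm) := by
      intro x hx
      by_cases hxm : x ∈ Bm
      · exact Or.inl ⟨hx.1, hxm⟩
      · exact Or.inr ⟨hx.2, hxm⟩
    have h5 : volume (U ∩ Bp) ≤ volume (U ∩ Bm) + volume (Bp \ Bm) :=
      (measure_mono hcov).trans (measure_union_le _ _)
    have hBmBp : Bm ⊆ Bp := hsub4.trans hsub2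
    have h6 : volume (Bp \ Bm) = volume Bp - volume Bm :=
      measure_diff hBmBp measurableSet_ball.nullMeasurableSet
        (measure_ball_lt_top.ne)
    have h7 : (volume (Bp \ Bm)).toReal = (volume Bp).toReal - (volume Bm).toReal := by
      rw [h6, ENNReal.toReal_sub_of_le (measure_mono hBmBp) hfin]
    have h8 : (volume (U ∩ Bp)).toReal ≤ (volume (U ∩ Bm)).toReal + (volume (Bp \ Bm)).toReal := by
      have := ENNReal.toReal_mono
        (ENNReal.add_ne_top.2 ⟨hfinU _ (inter_subset_right.trans hBmBp), hfinU _ diff_subset⟩) h5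
      rwa [ENNReal.toReal_add (hfinU _ (inter_subset_right.trans hBmBp)) (hfinU _ diff_subset)]
        at this
    linarith
  rw [abs_sub_le_iff]
  constructor <;> linarith

lemma cont_vol (hn : 0 < n) (U : Set E) :
    Continuous (fun p : E × ℝ => (volume (U ∩ ball p.1 p.2)).toReal) := by
  rw [Metric.continuous_iff]
  rintro ⟨z, ρ⟩ ε hε
  set k := (volume (ball (0:E) 1)).toReal
  have hφ : Continuous (fun h : ℝ => (max (ρ+h) 0)^n * k - (max (ρ-h) 0)^n * k) := by
    continuity
  have this : Filter.Tendsto (fun h : ℝ => (max (ρ+h) 0)^n * k - (max (ρ-h) 0)^n * k)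
      (nhds 0) (nhds 0) := by simpa using hφ.tendsto 0
  rw [Metric.tendsto_nhds_nhds] at this
  obtain ⟨δ', hδ', hball⟩ := this ε hε
  refine ⟨δ'/2, by linarith, ?_⟩
  rintro ⟨z', ρ'⟩ hdist
  set h := dist z' z + |ρ' - ρ| with hh
  have hz : dist z' z < δ'/2 := lt_of_le_of_lt (le_max_left _ _) (by simpa [Prod.dist_eq] using hdist)
  have hρ : |ρ' - ρ| < δ'/2 := by
    have := lt_of_le_of_lt (le_max_right _ _) (by simpa [Prod.dist_eq] using hdist)
    simpa [Real.dist_eq] using this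
  have hhδ : |h| < δ' := by
    rw [abs_of_nonneg (by positivity)]
    linarith
  have hb := hball (by simpa [Real.dist_eq] using hhδ)
  rw [Real.dist_eq, sub_zero] at hb
  have hkey := key_ineq U z z' ρ ρ' h le_rfl
  rw [Real.dist_eq]
  calc |(volume (U ∩ ball z' ρ')).toReal - (volume (U ∩ ball z ρ)).toReal|
      ≤ (volume (ball z (ρ+h))).toReal - (volume (ball z (ρ-h))).toReal := hkey
    _ = (max (ρ+h) 0)^n * k - (max (ρ-h) 0)^n * k := by
        rw [volBall_toReal hn z (ρ+h), volBall_toReal hn z (ρ-h)]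
    _ ≤ |(max (ρ+h) 0)^n * k - (max (ρ-h) 0)^n * k| := le_abs_self _
    _ < ε := hb


lemma ball_subset_omega {Ω : Set E} (hΩ : IsOpen Ω) {z : E} (hz : z ∈ Ω) {r : ℝ}
    (hr : r ≤ Metric.infDist z (frontier Ω)) : ball z r ⊆ Ω := by
  have hdisj : Disjoint (ball z r) (frontier Ω) :=
    (Metric.disjoint_ball_infDist).mono_left (ball_subset_ball hr)
  have hsub : ball z r ⊆ Ω ∪ (closure Ω)ᶜ := by
    intro x hx
    by_cases hc : x ∈ closure Ω
    · left
      have : x ∉ frontier Ω := fun hf => (hdisj.ne_of_mem hx hf) rfl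
      rw [frontier, hΩ.interior_eq] at this
      by_contra hxΩ
      exact this ⟨hc, hxΩ⟩
    · exact Or.inr hc
  rcases le_or_gt r 0 with h0 | h0
  · simp [ball_eq_empty.2 h0]
  · exact (convex_ball z r).isPreconnected.subset_left_of_subset_union
      hΩ isClosed_closure.isOpen_compl
      (disjoint_compl_right.mono_left subset_closure) hsub
      ⟨z, mem_ball_self h0, hz⟩

lemma cone_lemma {Ω : Set E} (hΩ : IsOpen Ω) {τ lam : ℝ} (hlam1 : lam ≤ τ/3) (hlam2 : lam ≤ 1/18)
    (hlam0 : 0 < lam) {z : E} (hz : z ∈ Ω) {ρ : ℝ} (hρ : 0 < ρ)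
    (hrl : ρ ≤ lam * Metric.infDist z (frontier Ω)) :
    ball z ρ ⊆ Ω ∧ ∀ y' ∈ ball z ρ, ∀ x ∈ ball z ρ,
      dist x y' < τ * Metric.infDist y' (frontier Ω) := by
  set dz := Metric.infDist z (frontier Ω) with hdz
  have hdz0 : 0 < dz := by nlinarith
  have hballΩ : ball z ρ ⊆ Ω := ball_subset_omega hΩ hz (hrl.trans (by nlinarith))
  refine ⟨hballΩ, fun y' hy' x hx => ?_⟩
  have hdy' : dz - dist z y' ≤ Metric.infDist y' (frontier Ω) := by
    have h : Metric.infDist z (frontier Ω) ≤ Metric.infDist y' (frontier Ω) + dist z y' :=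
      Metric.infDist_le_infDist_add_dist
    rw [← hdz] at h
    linarith
  rw [mem_ball] at hy' hx
  have h1 : dist x y' ≤ dist x z + dist z y' := dist_triangle x z y'
  have h2 : dist z y' < ρ := by rwa [dist_comm]
  have hρdz : ρ ≤ lam * dz := hrl
  have hτ3 : 3 * lam ≤ τ := by linarith
  calc dist x y' < 2 * ρ := by linarith
    _ ≤ 2 * lam * dz := by linarith
    _ < τ * (dz - ρ) := by
        have hd1 : lam * dz ≤ (1/18) * dz := mul_le_mul_of_nonneg_right hlam2 hdz0.le
        have hd2 : (17/18) * dz ≤ dz - ρ := by linarith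
        have hd3 : 3 * lam * ((17/18) * dz) ≤ τ * (dz - ρ) :=
          mul_le_mul hτ3 hd2 (by linarith) (by linarith)
        nlinarith [mul_pos hlam0 hdz0]
    _ ≤ τ * (dz - dist z y') := by nlinarith
    _ ≤ τ * Metric.infDist y' (frontier Ω) := by nlinarith


lemma perball (hn : 0 < n) {Ω U : Set E} {τ δ : ℝ} (hδ : 0 ≤ δ) (hU : IsOpen U)
    {z : E} {ρ : ℝ} (hρ : 0 < ρ)
    (hballΩ : ball z ρ ⊆ Ω)
    (hcone : ∀ y' ∈ ball z ρ, ∀ x ∈ ball z ρ, dist x y' < τ * Metric.infDist y' (frontier Ω))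
    (hhalf : volume (U ∩ ball z ρ) = volume (ball z ρ) / 2) :
    ENNReal.ofReal ((((volume (ball (0:E) 1)).toReal * ρ^n / 2)^2) * (2*ρ)^(-((n:ℝ)+δ)))
      ≤ ∫⁻ y in U ∩ ball z ρ,
          ∫⁻ x in {x | x ∈ Ω ∧ dist x y < τ * Metric.infDist y (frontier Ω)},
            ENNReal.ofReal (|U.indicator (fun _ => (1:ℝ)) x - U.indicator (fun _ => (1:ℝ)) y|
              / dist x y ^ ((n:ℝ)+δ)) := by
  haveI : Nontrivial E := by
    have : Nonempty (Fin n) := ⟨⟨0, hn⟩⟩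
    infer_instance
  set B := ball z ρ with hB
  set k := (volume (ball (0:E) 1)).toReal with hk
  have hκfin : volume (ball (0:E) 1) ≠ ⊤ := measure_ball_lt_top.ne
  have hκ : volume (ball (0:E) 1) = ENNReal.ofReal k := (ENNReal.ofReal_toReal hκfin).symm
  have hvolB : volume B = ENNReal.ofReal (ρ^n * k) := by
    rw [hB, Measure.addHaar_ball _ _ hρ.le, finrank_euclideanSpace_fin, hκ,
      ENNReal.ofReal_mul (by positivity)]
  have hvolB2 : volume B / 2 = ENNReal.ofReal (ρ^n * k / 2) := by
    rw [hvolB, ENNReal.ofReal_div_of_pos (by norm_num), ENNReal.ofReal_ofNat]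
  set c1 : ℝ := (2*ρ)^(-((n:ℝ)+δ)) with hc1
  have hc1pos : 0 < c1 := Real.rpow_pos_of_pos (by linarith) _
  -- inner bound for each y in U ∩ B
  have hinner : ∀ y ∈ U ∩ B,
      ENNReal.ofReal c1 * (volume B / 2)
        ≤ ∫⁻ x in {x | x ∈ Ω ∧ dist x y < τ * Metric.infDist y (frontier Ω)},
            ENNReal.ofReal (|U.indicator (fun _ => (1:ℝ)) x - U.indicator (fun _ => (1:ℝ)) y|
              / dist x y ^ ((n:ℝ)+δ)) := by
    intro y hy
    have hsub : B \ U ⊆ {x | x ∈ Ω ∧ dist x y < τ * Metric.infDist y (frontier Ω)} := by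
      intro x hx
      exact ⟨hballΩ hx.1, hcone y hy.2 x hx.1⟩
    have hmeasBU : MeasurableSet (B \ U) :=
      measurableSet_ball.diff hU.measurableSet
    have step1 : ∫⁻ x in B \ U,
        ENNReal.ofReal (|U.indicator (fun _ => (1:ℝ)) x - U.indicator (fun _ => (1:ℝ)) y|
          / dist x y ^ ((n:ℝ)+δ))
        ≤ ∫⁻ x in {x | x ∈ Ω ∧ dist x y < τ * Metric.infDist y (frontier Ω)},
            ENNReal.ofReal (|U.indicator (fun _ => (1:ℝ)) x - U.indicator (fun _ => (1:ℝ)) y|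
              / dist x y ^ ((n:ℝ)+δ)) :=
      lintegral_mono' (Measure.restrict_mono hsub le_rfl) le_rfl
    refine le_trans ?_ step1
    have step2 : ∀ x ∈ B \ U,
        ENNReal.ofReal c1
          ≤ ENNReal.ofReal (|U.indicator (fun _ => (1:ℝ)) x - U.indicator (fun _ => (1:ℝ)) y|
              / dist x y ^ ((n:ℝ)+δ)) := by
      intro x hx
      have hxU : x ∉ U := hx.2
      have hyU : y ∈ U := hy.1
      have hfx : U.indicator (fun _ => (1:ℝ)) x = 0 := indicator_of_notMem hxU _
      have hfy : U.indicator (fun _ => (1:ℝ)) y = 1 := indicator_of_mem hyU _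
      rw [hfx, hfy]
      have hxy : x ≠ y := fun h => hxU (h ▸ hyU)
      have hdpos : 0 < dist x y := dist_pos.2 hxy
      have hdlt : dist x y < 2 * ρ := by
        have h1 : dist x z < ρ := hx.1
        have h2 : dist z y < ρ := by
          have := hy.2; rw [hB, mem_ball] at this; rw [dist_comm]; exact this
        calc dist x y ≤ dist x z + dist z y := dist_triangle _ _ _
          _ < 2 * ρ := by linarith
      apply ENNReal.ofReal_le_ofReal
      rw [abs_of_nonpos (by norm_num), neg_sub, sub_zero]
      rw [hc1, Real.rpow_neg (by linarith : (0:ℝ) ≤ 2*ρ)]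
      rw [inv_eq_one_div]
      apply one_div_le_one_div_of_le
      · exact Real.rpow_pos_of_pos hdpos _
      · exact Real.rpow_le_rpow dist_nonneg hdlt.le (by positivity)
    have hae : ∀ᵐ x ∂(volume.restrict (B \ U)),
        ENNReal.ofReal c1
          ≤ ENNReal.ofReal (|U.indicator (fun _ => (1:ℝ)) x - U.indicator (fun _ => (1:ℝ)) y|
              / dist x y ^ ((n:ℝ)+δ)) :=
      (ae_restrict_iff' hmeasBU).2 (ae_of_all _ step2)
    have step3 : ENNReal.ofReal c1 * volume (B \ U)
        ≤ ∫⁻ x in B \ U,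
            ENNReal.ofReal (|U.indicator (fun _ => (1:ℝ)) x - U.indicator (fun _ => (1:ℝ)) y|
              / dist x y ^ ((n:ℝ)+δ)) := by
      rw [← setLIntegral_const]
      exact lintegral_mono_ae hae
    have hvoldiff : volume (B \ U) = volume B / 2 := by
      have h1 : B \ U = B \ (U ∩ B) := by ext x; simp only [mem_diff, mem_inter_iff]; tauto
      rw [h1, measure_diff inter_subset_right (hU.measurableSet.inter measurableSet_ball).nullMeasurableSet
        ((measure_mono inter_subset_right).trans_lt measure_ball_lt_top).ne, hhalf,
        ENNReal.sub_half measure_ball_lt_top.ne]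
    rwa [hvoldiff] at step3
  -- outer bound
  have hmeasUB : MeasurableSet (U ∩ B) := hU.measurableSet.inter measurableSet_ball
  have haeo : ∀ᵐ y ∂(volume.restrict (U ∩ B)),
      ENNReal.ofReal c1 * (volume B / 2)
        ≤ ∫⁻ x in {x | x ∈ Ω ∧ dist x y < τ * Metric.infDist y (frontier Ω)},
            ENNReal.ofReal (|U.indicator (fun _ => (1:ℝ)) x - U.indicator (fun _ => (1:ℝ)) y|
              / dist x y ^ ((n:ℝ)+δ)) :=
    (ae_restrict_iff' hmeasUB).2 (ae_of_all _ hinner)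
  have houter : (ENNReal.ofReal c1 * (volume B / 2)) * volume (U ∩ B)
      ≤ ∫⁻ y in U ∩ B,
          ∫⁻ x in {x | x ∈ Ω ∧ dist x y < τ * Metric.infDist y (frontier Ω)},
            ENNReal.ofReal (|U.indicator (fun _ => (1:ℝ)) x - U.indicator (fun _ => (1:ℝ)) y|
              / dist x y ^ ((n:ℝ)+δ)) := by
    rw [← setLIntegral_const]
    exact lintegral_mono_ae haeo
  refine le_trans (le_of_eq ?_) houter
  rw [hhalf, hvolB2]
  rw [← ENNReal.ofReal_mul hc1pos.le, ← ENNReal.ofReal_mul (by positivity)]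
  congr 1
  rw [hk]
  ring
set_option maxHeartbeats 2000000 in
lemma halving_ball (hn : 0 < n) {Ω U : Set E} (hΩopen : IsOpen Ω) {xJ : E} {s CJ lam : ℝ}
    (hs : 1 ≤ s) (hCJ : 1 ≤ CJ)
    (hJohn : IsDistanceJohn n s CJ xJ Ω) (hUopen : IsOpen U) (hUΩ : U ⊆ Ω)
    (hUB0 : U ∩ ball xJ (Metric.infDist xJ (frontier Ω) / 18) = ∅)
    (hlam2 : lam ≤ 1/18) (hlam0 : 0 < lam)
    (hfr : (frontier Ω).Nonempty)
    {y : E} (hy : y ∈ U) :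
    ∃ z ρ, 0 < ρ ∧ ρ ≤ lam * Metric.infDist z (frontier Ω) ∧ z ∈ Ω ∧
      (dist y z) ^ s ≤ CJ * (ρ / lam) ∧
      volume (U ∩ ball z ρ) = volume (ball z ρ) / 2 := by
  obtain ⟨hxJ, hcurves⟩ := hJohn
  obtain ⟨γ, hγcont, hγ0, hγ1, hγprop⟩ := hcurves y (hUΩ hy)
  set d : E → ℝ := fun w => Metric.infDist w (frontier Ω) with hd
  have hdpos : ∀ w ∈ Ω, 0 < d w := by
    intro w hw
    refine (IsClosed.notMem_iff_infDist_pos isClosed_frontier hfr).1 ?_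
    intro hwf
    rw [hΩopen.frontier_eq] at hwf
    exact hwf.2 hw
  set c : ℝ → E := fun t => γ (max (t-1) 0) with hc
  set r : ℝ → ℝ := fun t => min t 1 * (lam * d (c t)) with hr
  have hmem : ∀ t ∈ Icc (0:ℝ) 2, max (t-1) 0 ∈ Icc (0:ℝ) 1 := by
    intro t ht
    exact ⟨le_max_right _ _, max_le (by linarith [ht.2]) zero_le_one⟩
  have hcΩ : ∀ t ∈ Icc (0:ℝ) 2, c t ∈ Ω := fun t ht => (hγprop _ (hmem t ht)).1
  have hccont : ContinuousOn c (Icc 0 2) := by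
    apply hγcont.comp (Continuous.continuousOn (by continuity))
    intro t ht
    exact hmem t ht
  have hdcont : Continuous (fun w : E => d w) := Metric.continuous_infDist_pt _
  have hrcont : ContinuousOn r (Icc 0 2) := by
    apply ContinuousOn.mul (Continuous.continuousOn (by continuity))
    exact ContinuousOn.mul continuousOn_const (hdcont.comp_continuousOn hccont)
  set g : ℝ → ℝ := fun t => (volume (U ∩ ball (c t) (r t))).toReal
    - (volume (ball (c t) (r t))).toReal / 2 with hg
  have hgcont : ContinuousOn g (Icc 0 2) := by
    have h1 : ContinuousOn (fun t => (c t, r t)) (Icc (0:ℝ) 2) := hccont.prodMk hrcont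
    have h2 := (cont_vol hn U).comp_continuousOn h1
    have h3 : ContinuousOn (fun t => (volume (ball (c t) (r t))).toReal) (Icc (0:ℝ) 2) := by
      have := (cont_vol hn univ).comp_continuousOn h1
      simpa [univ_inter, Function.comp_def] using this
    exact h2.sub (h3.div_const 2)
  -- starting point
  obtain ⟨ε, hε, hball⟩ := Metric.isOpen_iff.1 hUopen y hy
  have hdy : 0 < d y := hdpos y (hUΩ hy)
  set t₀ : ℝ := min 1 (ε / (lam * d y)) with ht₀
  have ht₀pos : 0 < t₀ := lt_min one_pos (by positivity)
  have ht₀le : t₀ ≤ 1 := min_le_left _ _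
  have hct₀ : c t₀ = y := by
    have : max (t₀ - 1) 0 = 0 := max_eq_right (by linarith)
    rw [hc]; simp only [this, hγ0]
  have hrt₀ : r t₀ = t₀ * (lam * d y) := by rw [hr]; simp [min_eq_left ht₀le, hct₀]
  have hrt₀pos : 0 < r t₀ := by rw [hrt₀]; positivity
  have hrt₀ε : r t₀ ≤ ε := by
    rw [hrt₀]
    calc t₀ * (lam * d y) ≤ (ε / (lam * d y)) * (lam * d y) := by
          apply mul_le_mul_of_nonneg_right (min_le_right _ _) (by positivity)
      _ = ε := by field_simp
  have hgt₀ : 0 < g t₀ := by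
    have hsub : ball (c t₀) (r t₀) ⊆ U := by
      rw [hct₀]; exact (ball_subset_ball hrt₀ε).trans hball
    have : U ∩ ball (c t₀) (r t₀) = ball (c t₀) (r t₀) := inter_eq_self_of_subset_right hsub
    rw [hg]; simp only [this]
    have hpos : 0 < (volume (ball (c t₀) (r t₀))).toReal :=
      ENNReal.toReal_pos (measure_ball_pos _ _ hrt₀pos).ne' measure_ball_lt_top.ne
    linarith
  -- endpoint
  have hc2 : c 2 = xJ := by rw [hc]; norm_num [hγ1]
  have hr2 : r 2 = lam * d xJ := by rw [hr]; simp [hc2, min_eq_right (by norm_num : (1:ℝ) ≤ 2)]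
  have hdxJ : 0 < d xJ := hdpos xJ hxJ
  have hg2 : g 2 < 0 := by
    have hsub : ball (c 2) (r 2) ⊆ ball xJ (d xJ / 18) := by
      rw [hc2, hr2]
      exact ball_subset_ball (by nlinarith)
    have hempty : U ∩ ball (c 2) (r 2) = ∅ :=
      eq_empty_of_subset_empty ((inter_subset_inter_right U hsub).trans hUB0.subset)
    show (volume (U ∩ ball (c 2) (r 2))).toReal - (volume (ball (c 2) (r 2))).toReal / 2 < 0
    rw [hempty]
    have hpos : 0 < (volume (ball (c 2) (r 2))).toReal :=
      ENNReal.toReal_pos (measure_ball_pos _ _ (by rw [hr2]; positivity)).ne'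
        measure_ball_lt_top.ne
    simp only [measure_empty]
    simp
    linarith
  -- IVT
  have hIcc : Icc t₀ 2 ⊆ Icc (0:ℝ) 2 := Icc_subset_Icc (le_of_lt ht₀pos) le_rfl
  have hIVT := intermediate_value_Icc' (by linarith : t₀ ≤ 2) (hgcont.mono hIcc)
  have h0mem : (0:ℝ) ∈ Icc (g 2) (g t₀) := ⟨le_of_lt hg2, le_of_lt hgt₀⟩
  obtain ⟨t, htmem, hgt⟩ := hIVT h0mem
  -- conclusion
  have htIcc : t ∈ Icc (0:ℝ) 2 := hIcc htmem
  have hzΩ : c t ∈ Ω := hcΩ t htIcc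
  have hdz : 0 < d (c t) := hdpos _ hzΩ
  have hmint : 0 < min t 1 := lt_min (lt_of_lt_of_le ht₀pos htmem.1) one_pos
  have hρpos : 0 < r t := by rw [hr]; positivity
  have hρle : r t ≤ lam * d (c t) := by
    show min t 1 * (lam * d (c t)) ≤ lam * d (c t)
    exact mul_le_of_le_one_left (by positivity) (min_le_right t 1)
  refine ⟨c t, r t, hρpos, hρle, hzΩ, ?_, ?_⟩
  · -- the s-power estimate
    rcases le_or_gt t 1 with h1 | h1
    · have : c t = y := by
        have : max (t-1) 0 = 0 := max_eq_right (by linarith)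
        rw [hc]; simp only [this, hγ0]
      rw [this, dist_self, Real.zero_rpow (by linarith : s ≠ 0)]
      positivity
    · have hmax : max (t-1) 0 = t - 1 := max_eq_left (by linarith)
      have hJ := (hγprop (t-1) ⟨by linarith, by linarith [htIcc.2]⟩).2
      have hct : c t = γ (t-1) := by
        show γ (max (t-1) 0) = γ (t-1)
        rw [hmax]
      have hrt : r t = lam * d (c t) := by
        show min t 1 * (lam * d (c t)) = lam * d (c t)
        rw [min_eq_right (by linarith : (1:ℝ) ≤ t), one_mul]
      have : r t / lam = d (c t) := by rw [hrt]; field_simp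
      rw [dist_comm, hct, this, ← hct]
      rw [hct]
      exact le_of_lt hJ
  · -- halving
    have hfin1 : volume (U ∩ ball (c t) (r t)) ≠ ⊤ :=
      ((measure_mono inter_subset_right).trans_lt measure_ball_lt_top).ne
    have hfin2 : volume (ball (c t) (r t)) / 2 ≠ ⊤ :=
      (ENNReal.div_lt_top measure_ball_lt_top.ne (by norm_num)).ne
    apply (ENNReal.toReal_eq_toReal_iff' hfin1 hfin2).1
    rw [ENNReal.toReal_div]
    have : (2:ℝ≥0∞).toReal = 2 := by simp
    rw [this]
    have h9 : (volume (U ∩ ball (c t) (r t))).toReal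
        - (volume (ball (c t) (r t))).toReal / 2 = 0 := hgt
    linarith

end helpers

/-- weak geometric Boxing inequality on `s`-distance John domains: for
open `U ⊆ Ω` disjoint from the central ball `B₀ = B(x_J, d(x_J)/18)` there are pairwise
disjoint balls `B(x_i, R_i)` with `U ⊆ ⋃ B(x_i, 5C₁R_i)` and
`Σ R_i^{s(n−δ)} ≤ C₂(1−δ) 𝒫_{δ,τ}(U,Ω)`. -/
theorem stmt14 {n : ℕ} (hn : 2 ≤ n) (δ τ s CJ : ℝ)
    (hδ : δ ∈ Set.Ioo (0 : ℝ) 1) (hτ : τ ∈ Set.Ioo (0 : ℝ) 1)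
    (hs1 : 1 ≤ s) (hs2 : s ≤ (n : ℝ) / ((n : ℝ) - δ)) (hCJ : 1 ≤ CJ)
    (Ω : Set (EuclideanSpace ℝ (Fin n))) (xJ : EuclideanSpace ℝ (Fin n))
    (hΩopen : IsOpen Ω) (hΩconn : IsConnected Ω) (hΩbdd : Bornology.IsBounded Ω)
    (hJohn : IsDistanceJohn n s CJ xJ Ω) :
    ∃ C₁ : ℝ, 1 ≤ C₁ ∧ ∃ C₂ : ℝ, 0 < C₂ ∧
      ∀ U : Set (EuclideanSpace ℝ (Fin n)), IsOpen U → U ⊆ Ω →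
        U ∩ Metric.ball xJ (Metric.infDist xJ (frontier Ω) / 18) = ∅ →
        ∃ (c : ℕ → EuclideanSpace ℝ (Fin n)) (R : ℕ → ℝ),
          (∀ i, 0 ≤ R i) ∧
          (Pairwise fun i j => Disjoint (Metric.ball (c i) (R i)) (Metric.ball (c j) (R j))) ∧
          U ⊆ (⋃ i, Metric.ball (c i) (5 * C₁ * R i)) ∧
          (∑' i, ENNReal.ofReal (R i ^ (s * ((n : ℝ) - δ))))
            ≤ ENNReal.ofReal (C₂ * (1 - δ))
                * fracEnergy n δ τ Ω (Set.indicator U (fun _ => (1 : ℝ))) := by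
  classical
  have hn0 : 0 < n := by omega
  haveI hne : Nonempty (Fin n) := ⟨⟨0, hn0⟩⟩
  obtain ⟨hδ0, hδ1⟩ := hδ
  obtain ⟨hτ0, hτ1⟩ := hτ
  have hs0 : 0 < s := lt_of_lt_of_le one_pos hs1
  have hΩne : Ω.Nonempty := hΩconn.nonempty
  have hΩnuniv : Ω ≠ univ := by
    intro h
    exact NormedSpace.unbounded_univ ℝ (EuclideanSpace ℝ (Fin n)) (h ▸ hΩbdd)
  have hfr : (frontier Ω).Nonempty := nonempty_frontier_iff.2 ⟨hΩne, hΩnuniv⟩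
  -- constants
  set lam : ℝ := min (τ/3) (1/18) with hlamdef
  have hlam0 : 0 < lam := lt_min (by linarith) (by norm_num)
  have hlam1 : lam ≤ τ/3 := min_le_left _ _
  have hlam2 : lam ≤ 1/18 := min_le_right _ _
  set D : ℝ := Metric.diam Ω + 1 with hDdef
  have hD0 : 0 < D := by have := Metric.diam_nonneg (s := Ω); linarith
  have hdD : ∀ z ∈ Ω, Metric.infDist z (frontier Ω) ≤ D := by
    intro z hz
    obtain ⟨w, hw⟩ := hfr
    calc Metric.infDist z (frontier Ω) ≤ dist z w := Metric.infDist_le_dist_of_mem hw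
      _ ≤ Metric.diam (closure Ω) :=
          Metric.dist_le_diam_of_mem hΩbdd.closure (subset_closure hz) (frontier_subset_closure hw)
      _ = Metric.diam Ω := Metric.diam_closure _
      _ ≤ D := by linarith
  set k : ℝ := (volume (Metric.ball (0 : EuclideanSpace ℝ (Fin n)) 1)).toReal with hkdef
  have hk0 : 0 < k :=
    ENNReal.toReal_pos (Metric.measure_ball_pos _ _ one_pos).ne' measure_ball_lt_top.ne
  set M : ℝ := (CJ/lam)^(1/s) + (lam*D)^(1-(1/s)) + 1 with hMdef
  have hM0 : 0 < M := by
    rw [hMdef]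
    have h1 : (0:ℝ) ≤ (CJ/lam)^(1/s) := Real.rpow_nonneg (by positivity) _
    have h2 : (0:ℝ) ≤ (lam*D)^(1-(1/s)) := Real.rpow_nonneg (by positivity) _
    linarith
  set c₀ : ℝ := (k/2)^2 * (2:ℝ)^(-((n:ℝ)+δ)) with hc₀def
  have hc₀0 : 0 < c₀ := by
    have : (0:ℝ) < (2:ℝ)^(-((n:ℝ)+δ)) := Real.rpow_pos_of_pos two_pos _
    positivity
  have hnδ : 0 < (n:ℝ) - δ := by
    have h2 : (2:ℝ) ≤ (n:ℝ) := by exact_mod_cast hn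
    linarith
  set Mp : ℝ := M ^ (s * ((n:ℝ) - δ)) with hMpdef
  have hMp0 : 0 < Mp := Real.rpow_pos_of_pos hM0 _
  refine ⟨1, le_rfl, Mp / (c₀ * (1 - δ)), div_pos hMp0 (mul_pos hc₀0 (by linarith)), ?_⟩
  intro U hUopen hUΩ hUB0
  -- the Vitali family of halving balls
  set t : Set ((EuclideanSpace ℝ (Fin n)) × ℝ) :=
    {p | 0 < p.2 ∧ p.2 ≤ lam * Metric.infDist p.1 (frontier Ω) ∧ p.1 ∈ Ω ∧
      volume (U ∩ Metric.ball p.1 p.2) = volume (Metric.ball p.1 p.2) / 2} with htdef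
  have ht2pos : ∀ p ∈ t, 0 < p.2 := fun p hp => hp.1
  have htlamD : ∀ p ∈ t, p.2 ≤ lam * D := by
    intro p hp
    exact hp.2.1.trans (mul_le_mul_of_nonneg_left (hdD _ hp.2.2.1) hlam0.le)
  have hrbound : ∀ p ∈ t, M * p.2^(1/s) ≤ M * (lam * D)^(1/s) := by
    intro p hp
    exact mul_le_mul_of_nonneg_left
      (Real.rpow_le_rpow (hp.1).le (htlamD p hp) (by positivity)) hM0.le
  obtain ⟨u, hut, hdisj, hcover⟩ :=
    Vitali.exists_disjoint_subfamily_covering_enlargement_closedBall t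
      (fun p => p.1) (fun p => M * p.2^(1/s)) (M * (lam*D)^(1/s)) hrbound 4 (by norm_num)
  -- small radius is at most the big radius
  have hsmall : ∀ p ∈ t, p.2 ≤ M * p.2^(1/s) := by
    intro p hp
    have hv : 0 < p.2 := hp.1
    have h1 : p.2 = p.2^(1-(1/s)) * p.2^(1/s) := by
      rw [← Real.rpow_add hv, sub_add_cancel, Real.rpow_one]
    have h1s : (0:ℝ) ≤ 1 - 1/s := by
      have : 1/s ≤ 1 := by
        rw [div_le_one hs0]; exact hs1
      linarith
    have h2 : p.2^(1-(1/s)) ≤ (lam*D)^(1-(1/s)) :=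
      Real.rpow_le_rpow hv.le (htlamD p hp) h1s
    have h3 : (lam*D)^(1-(1/s)) ≤ M := by
      have h4 : (0:ℝ) ≤ (CJ/lam)^(1/s) := Real.rpow_nonneg (by positivity) _
      rw [hMdef]; linarith
    calc p.2 = p.2^(1-(1/s)) * p.2^(1/s) := h1
      _ ≤ (lam*D)^(1-(1/s)) * p.2^(1/s) :=
          mul_le_mul_of_nonneg_right h2 (Real.rpow_nonneg hv.le _)
      _ ≤ M * p.2^(1/s) :=
          mul_le_mul_of_nonneg_right h3 (Real.rpow_nonneg hv.le _)
  -- every point of U lies well inside some Vitali ball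
  have hkey : ∀ y ∈ U, ∃ p ∈ t, dist y p.1 ≤ M * p.2^(1/s) := by
    intro y hy
    obtain ⟨z, ρ, hρ0, hρlam, hzΩ, hdists, hhalf⟩ :=
      halving_ball hn0 hΩopen hs1 hCJ hJohn hUopen hUΩ hUB0 hlam2 hlam0 hfr hy
    refine ⟨(z, ρ), ⟨hρ0, hρlam, hzΩ, hhalf⟩, ?_⟩
    have ha : dist y z = (dist y z ^ s) ^ (1/s) := by
      rw [← Real.rpow_mul dist_nonneg, mul_one_div, div_self hs0.ne', Real.rpow_one]
    have hb : (dist y z ^ s) ^ (1/s) ≤ (CJ * (ρ/lam)) ^ (1/s) :=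
      Real.rpow_le_rpow (Real.rpow_nonneg dist_nonneg _) hdists (by positivity)
    have hc : (CJ * (ρ/lam)) ^ (1/s) = (CJ/lam)^(1/s) * ρ^(1/s) := by
      rw [show CJ * (ρ/lam) = (CJ/lam) * ρ by ring, Real.mul_rpow (by positivity) hρ0.le]
    have hd2 : (CJ/lam)^(1/s) * ρ^(1/s) ≤ M * ρ^(1/s) := by
      apply mul_le_mul_of_nonneg_right _ (Real.rpow_nonneg hρ0.le _)
      have h4 : (0:ℝ) ≤ (lam*D)^(1-(1/s)) := Real.rpow_nonneg (by positivity) _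
      rw [hMdef]; linarith
    calc dist y (z, ρ).1 = (dist y z ^ s) ^ (1/s) := ha
      _ ≤ (CJ * (ρ/lam)) ^ (1/s) := hb
      _ = (CJ/lam)^(1/s) * ρ^(1/s) := hc
      _ ≤ M * ρ^(1/s) := hd2
  -- countability and enumeration of the Vitali subfamily
  have hcount : u.Countable := by
    apply Set.PairwiseDisjoint.countable_of_nonempty_interior hdisj
    intro p hp
    have hp2 : 0 < M * p.2^(1/s) :=
      mul_pos hM0 (Real.rpow_pos_of_pos (ht2pos p (hut hp)) _)
    rw [interior_closedBall _ hp2.ne']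
    exact ⟨p.1, Metric.mem_ball_self hp2⟩
  obtain ⟨f, hfinj⟩ := Set.countable_iff_exists_injective.1 hcount
  set F : ℕ → (EuclideanSpace ℝ (Fin n)) × ℝ :=
    fun m => if h : ∃ p : u, f p = m then (h.choose : ↥u).1 else (xJ, 0) with hFdef
  have hFgood : ∀ m (h : ∃ p : u, f p = m), F m = (h.choose : ↥u).1 := by
    intro m h
    simp only [hFdef]
    rw [dif_pos h]
  have hFbad : ∀ m, ¬(∃ p : u, f p = m) → F m = (xJ, 0) := by
    intro m h
    simp only [hFdef]
    rw [dif_neg h]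
  have hFmem : ∀ m (h : ∃ p : u, f p = m), F m ∈ u := by
    intro m h
    rw [hFgood m h]
    exact (h.choose).2
  have hF2 : ∀ m, 0 ≤ (F m).2 := by
    intro m
    by_cases h : ∃ p : u, f p = m
    · exact (ht2pos _ (hut (hFmem m h))).le
    · rw [hFbad m h]
  have hFpos_good : ∀ m, 0 < (F m).2 → ∃ p : u, f p = m := by
    intro m hpos
    by_contra h
    rw [hFbad m h] at hpos
    exact lt_irrefl 0 hpos
  have hFinj : ∀ m m', m ≠ m' → (h : ∃ p : u, f p = m) → (h' : ∃ p : u, f p = m') →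
      F m ≠ F m' := by
    intro m m' hmm h h' heq
    rw [hFgood m h, hFgood m' h'] at heq
    have : (h.choose : ↥u) = h'.choose := Subtype.ext heq
    rw [← h.choose_spec, ← h'.choose_spec, this] at hmm
    exact hmm rfl
  have hFcover : ∀ b ∈ u, ∃ m, (∃ p : u, f p = m) ∧ F m = b := by
    intro b hb
    refine ⟨f ⟨b, hb⟩, ⟨⟨b, hb⟩, rfl⟩, ?_⟩
    have h : ∃ p : u, f p = f ⟨b, hb⟩ := ⟨⟨b, hb⟩, rfl⟩
    rw [hFgood _ h]
    have : h.choose = (⟨b, hb⟩ : ↥u) := hfinj h.choose_spec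
    rw [this]
  -- the answer
  refine ⟨fun m => (F m).1, fun m => M * ((F m).2)^(1/s), ?_, ?_, ?_, ?_⟩
  · intro m
    exact mul_nonneg hM0.le (Real.rpow_nonneg (hF2 m) _)
  · -- pairwise disjointness of the big balls
    intro i j hij
    show Disjoint (Metric.ball (F i).1 (M * ((F i).2)^(1/s)))
      (Metric.ball (F j).1 (M * ((F j).2)^(1/s)))
    by_cases hi : ∃ p : u, f p = i
    · by_cases hj : ∃ p : u, f p = j
      · have hne : F i ≠ F j := hFinj i j hij hi hj
        have := hdisj (hFmem i hi) (hFmem j hj) hne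
        exact this.mono Metric.ball_subset_closedBall Metric.ball_subset_closedBall
      · have : (F j).2 = 0 := by rw [hFbad j hj]
        rw [this, Real.zero_rpow (by positivity : (1:ℝ)/s ≠ 0), mul_zero]
        simp [Metric.ball_eq_empty.2 le_rfl]
    · have : (F i).2 = 0 := by rw [hFbad i hi]
      rw [this, Real.zero_rpow (by positivity : (1:ℝ)/s ≠ 0), mul_zero]
      simp [Metric.ball_eq_empty.2 le_rfl]
  · -- covering
    intro y hy
    obtain ⟨p, hp, hdist⟩ := hkey y hy
    obtain ⟨b, hb, hsub⟩ := hcover p hp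
    have hyb : y ∈ Metric.closedBall b.1 (4 * (M * b.2^(1/s))) :=
      hsub (Metric.mem_closedBall.2 hdist)
    obtain ⟨m, hgood, hFm⟩ := hFcover b hb
    have hb2 : 0 < b.2 := ht2pos b (hut hb)
    have hrb : 0 < M * b.2^(1/s) := mul_pos hM0 (Real.rpow_pos_of_pos hb2 _)
    refine Set.mem_iUnion.2 ⟨m, ?_⟩
    show y ∈ Metric.ball (F m).1 (5 * 1 * (M * ((F m).2)^(1/s)))
    rw [Metric.mem_ball, hFm]
    have h4 := Metric.mem_closedBall.1 hyb
    calc dist y b.1 ≤ 4 * (M * b.2^(1/s)) := h4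
      _ < 5 * 1 * (M * b.2^(1/s)) := by linarith
  · -- the sum estimate
    show (∑' m, ENNReal.ofReal ((M * ((F m).2)^(1/s)) ^ (s * ((n:ℝ) - δ))))
      ≤ ENNReal.ofReal (Mp / (c₀ * (1 - δ)) * (1 - δ))
        * fracEnergy n δ τ Ω (Set.indicator U (fun _ => (1:ℝ)))
    set Sρ : ℝ≥0∞ := ∑' m, ENNReal.ofReal ((F m).2 ^ ((n:ℝ) - δ)) with hSρdef
    have hterm : ∀ m, ENNReal.ofReal ((M * ((F m).2)^(1/s)) ^ (s * ((n:ℝ) - δ)))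
        = ENNReal.ofReal Mp * ENNReal.ofReal ((F m).2 ^ ((n:ℝ) - δ)) := by
      intro m
      rcases eq_or_lt_of_le (hF2 m) with hv | hv
      · rw [← hv, Real.zero_rpow (by positivity : (1:ℝ)/s ≠ 0), mul_zero,
          Real.zero_rpow (by positivity : s * ((n:ℝ) - δ) ≠ 0),
          Real.zero_rpow hnδ.ne', ENNReal.ofReal_zero, mul_zero]
      · have h1 : (M * ((F m).2)^(1/s)) ^ (s * ((n:ℝ) - δ))
            = Mp * ((F m).2 ^ ((n:ℝ) - δ)) := by
          rw [Real.mul_rpow hM0.le (Real.rpow_nonneg hv.le _), hMpdef,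
            ← Real.rpow_mul hv.le]
          congr 2
          field_simp
        rw [h1, ENNReal.ofReal_mul hMp0.le]
    rw [tsum_congr hterm, ENNReal.tsum_mul_left, ← hSρdef]
    -- lower bound of the energy
    have hEnergy : ENNReal.ofReal c₀ * Sρ
        ≤ fracEnergy n δ τ Ω (Set.indicator U (fun _ => (1:ℝ))) := by
      rw [hSρdef, ← ENNReal.tsum_mul_left]
      have hterm2 : ∀ m, ENNReal.ofReal c₀ * ENNReal.ofReal ((F m).2 ^ ((n:ℝ) - δ))
          ≤ ∫⁻ y in U ∩ Metric.ball (F m).1 (F m).2,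
              ∫⁻ x in {x | x ∈ Ω ∧ dist x y < τ * Metric.infDist y (frontier Ω)},
                ENNReal.ofReal (|U.indicator (fun _ => (1:ℝ)) x - U.indicator (fun _ => (1:ℝ)) y|
                  / dist x y ^ ((n:ℝ)+δ)) := by
        intro m
        rcases eq_or_lt_of_le (hF2 m) with hv | hv
        · rw [← hv, Real.zero_rpow hnδ.ne', ENNReal.ofReal_zero, mul_zero]
          exact zero_le
        · have hm : F m ∈ u := hFmem m (hFpos_good m hv)
          have hmt : F m ∈ t := hut hm
          obtain ⟨hρ0, hρlam, hzΩ, hhalf⟩ := hmt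
          obtain ⟨hballΩ, hcone⟩ := cone_lemma hΩopen hlam1 hlam2 hlam0 hzΩ hρ0 hρlam
          have hpb := perball hn0 hδ0.le hUopen hρ0 hballΩ hcone hhalf
          refine le_trans (le_of_eq ?_) hpb
          rw [← ENNReal.ofReal_mul hc₀0.le]
          congr 1
          set v := (F m).2 with hvdef
          have hv2n : (v^n)^2 = v ^ ((2:ℝ) * n) := by
            rw [← pow_mul, ← Real.rpow_natCast v (n*2)]
            congr 1
            push_cast
            ring
          have hvv : v ^ ((2:ℝ)*(n:ℝ)) * v^(-((n:ℝ)+δ)) = v^((n:ℝ)-δ) := by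
            rw [← Real.rpow_add hv]
            congr 1
            ring
          have h2v : (2*v)^(-((n:ℝ)+δ)) = (2:ℝ)^(-((n:ℝ)+δ)) * v^(-((n:ℝ)+δ)) :=
            Real.mul_rpow (by norm_num) hv.le
          rw [h2v, hc₀def]
          rw [show (k*v^n/2)^2 * ((2:ℝ)^(-((n:ℝ)+δ)) * v^(-((n:ℝ)+δ)))
            = (k/2)^2 * (2:ℝ)^(-((n:ℝ)+δ)) * ((v^n)^2 * v^(-((n:ℝ)+δ))) from by ring]
          rw [hv2n, hvv]
      have hmeas : ∀ m : ℕ, MeasurableSet (U ∩ Metric.ball (F m).1 (F m).2) :=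
        fun m => hUopen.measurableSet.inter measurableSet_ball
      have hdisj2 : Pairwise (Function.onFun Disjoint
          (fun m => U ∩ Metric.ball (F m).1 (F m).2)) := by
        intro i j hij
        by_cases hi : 0 < (F i).2
        · by_cases hj : 0 < (F j).2
          · have hgi := hFpos_good i hi
            have hgj := hFpos_good j hj
            have hne : F i ≠ F j := hFinj i j hij hgi hgj
            have hbig := hdisj (hFmem i hgi) (hFmem j hgj) hne
            refine hbig.mono ?_ ?_
            · refine inter_subset_right.trans ((Metric.ball_subset_ball ?_).trans
                Metric.ball_subset_closedBall)
              exact hsmall _ (hut (hFmem i hgi))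
            · refine inter_subset_right.trans ((Metric.ball_subset_ball ?_).trans
                Metric.ball_subset_closedBall)
              exact hsmall _ (hut (hFmem j hgj))
          · have : Metric.ball (F j).1 (F j).2 = ∅ :=
              Metric.ball_eq_empty.2 (le_of_not_gt hj)
            rw [Function.onFun, this]
            simp
        · have : Metric.ball (F i).1 (F i).2 = ∅ :=
            Metric.ball_eq_empty.2 (le_of_not_gt hi)
          rw [Function.onFun, this]
          simp
      calc ∑' m, ENNReal.ofReal c₀ * ENNReal.ofReal ((F m).2 ^ ((n:ℝ) - δ))
          ≤ ∑' m, ∫⁻ y in U ∩ Metric.ball (F m).1 (F m).2,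
              ∫⁻ x in {x | x ∈ Ω ∧ dist x y < τ * Metric.infDist y (frontier Ω)},
                ENNReal.ofReal (|U.indicator (fun _ => (1:ℝ)) x - U.indicator (fun _ => (1:ℝ)) y|
                  / dist x y ^ ((n:ℝ)+δ)) := ENNReal.tsum_le_tsum hterm2
        _ = ∫⁻ y in ⋃ m, (U ∩ Metric.ball (F m).1 (F m).2),
              ∫⁻ x in {x | x ∈ Ω ∧ dist x y < τ * Metric.infDist y (frontier Ω)},
                ENNReal.ofReal (|U.indicator (fun _ => (1:ℝ)) x - U.indicator (fun _ => (1:ℝ)) y|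
                  / dist x y ^ ((n:ℝ)+δ)) := (lintegral_iUnion hmeas hdisj2 _).symm
        _ ≤ ∫⁻ y in Ω,
              ∫⁻ x in {x | x ∈ Ω ∧ dist x y < τ * Metric.infDist y (frontier Ω)},
                ENNReal.ofReal (|U.indicator (fun _ => (1:ℝ)) x - U.indicator (fun _ => (1:ℝ)) y|
                  / dist x y ^ ((n:ℝ)+δ)) := by
            apply lintegral_mono'
            · exact Measure.restrict_mono
                (Set.iUnion_subset fun m => inter_subset_left.trans hUΩ) le_rfl
            · exact le_rfl
        _ = fracEnergy n δ τ Ω (Set.indicator U (fun _ => (1:ℝ))) := rfl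
    have hC2 : (Mp / (c₀ * (1 - δ))) * (1 - δ) = Mp / c₀ := by
      have h1δ : (0:ℝ) < 1 - δ := by linarith
      rw [div_mul_eq_mul_div, div_eq_div_iff (by positivity) hc₀0.ne']
      ring
    rw [hC2]
    calc ENNReal.ofReal Mp * Sρ = ENNReal.ofReal (Mp/c₀ * c₀) * Sρ := by
          rw [div_mul_cancel₀ _ hc₀0.ne']
      _ = ENNReal.ofReal (Mp/c₀) * (ENNReal.ofReal c₀ * Sρ) := by
          rw [ENNReal.ofReal_mul (by positivity), mul_assoc]
      _ ≤ ENNReal.ofReal (Mp/c₀) * fracEnergy n δ τ Ω (Set.indicator U (fun _ => (1:ℝ))) :=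
          mul_le_mul_right hEnergy _
end
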